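/- For all x > 0, y > 0, and σ > 0, ∫_0^σ h(σ − τ, y)·h(τ, x) dτ = h(σ, x + y), where h(t, z) = z·exp(−(z − t)²/(2t))/√(2πt³) for t > 0 and h(t, z) = 0 for t ≤ 0. -/

import Mathlib

/-!
Write `h(t, z) = e^{z - t/2} ℓ(t, z)` with the Lévy density `ℓ(t, z) = z e^{-z²/(2t)} / √(2πt³)`.
The drift factors `e^{y - (σ-τ)/2} e^{x - τ/2} = e^{x + y - σ/2}` do not depend on `τ`, so it
suffices to convolve Lévy densities. Completing the square,
`x²/τ + y²/(σ-τ) = (x+y)²/σ + u²` with `u = (x(σ-τ) - yτ) / √(στ(σ-τ))`, and the integrand has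
the explicit primitive `-e^{-(x+y)²/(2σ)} / (2πσ^{3/2}) · ((x+y) G(u) + (y-x) e^{2xy/σ} G(u'))`,
where `G(s) = ∫₀ˢ e^{-t²/2} dt` and `u'` is `u` with `y` replaced by `-y`. On `(0, σ)`, `u`
runs from `+∞` to `-∞` while `u'` starts and ends at `+∞`, so the integral equals
`√(2π) (x+y) e^{-(x+y)²/(2σ)} / (2πσ^{3/2}) = ℓ(σ, x+y)`. The integrand is nonnegative, hence
integrable, so the fundamental theorem of calculus applies to this improper primitive.
-/

open Set MeasureTheory

/-- First-passage density `h t z = z exp(-(z-t)²/(2t))/√(2πt³)` for `t > 0`, `0` else. -/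
noncomputable def hker (t z : ℝ) : ℝ :=
  if 0 < t then z * Real.exp (-(z - t) ^ 2 / (2 * t)) / Real.sqrt (2 * Real.pi * t ^ 3)
  else 0

open Filter Real Topology intervalIntegral

theorem intervalIntegrable_deriv_of_nonneg_of_tendsto {f f' : ℝ → ℝ} {a b fa fb : ℝ}
    (hab : a < b) (hderiv : ∀ x ∈ Ioo a b, HasDerivAt f (f' x) x)
    (hpos : ∀ x ∈ Ioo a b, 0 ≤ f' x) (ha : Tendsto f (𝓝[>] a) (𝓝 fa))
    (hb : Tendsto f (𝓝[<] b) (𝓝 fb)) :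
    IntervalIntegrable f' volume a b := by
  have hf : ContinuousOn f (Ioo a b) := fun x hx => (hderiv x hx).continuousAt.continuousWithinAt
  refine intervalIntegrable_deriv_of_nonneg (g := extendFrom (Ioo a b) f) ?_ ?_ ?_ <;>
    simp only [min_eq_left hab.le, max_eq_right hab.le, uIcc_of_le hab.le]
  · exact continuousOn_Icc_extendFrom_Ioo hf ha hb
  · refine fun x hx => (hderiv x hx).congr_of_eventuallyEq ?_
    filter_upwards [Ioo_mem_nhds hx.1 hx.2] with y hy using extendFrom_extends hf y hy
  · exact hpos

noncomputable def gaussPrimitive (s : ℝ) : ℝ := ∫ t in (0 : ℝ)..s, exp (-t ^ 2 / 2)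

theorem integrable_exp_neg_sq_div_two : Integrable fun t : ℝ => exp (-t ^ 2 / 2) := by
  simpa [neg_div, div_eq_inv_mul] using integrable_exp_neg_mul_sq (b := 1 / 2) (by norm_num)

theorem hasDerivAt_gaussPrimitive (s : ℝ) : HasDerivAt gaussPrimitive (exp (-s ^ 2 / 2)) s :=
  integral_hasDerivAt_right integrable_exp_neg_sq_div_two.intervalIntegrable
    ((by fun_prop : Continuous fun t : ℝ => exp (-t ^ 2 / 2)).stronglyMeasurableAtFilter _ _)
    (by fun_prop)

theorem gaussPrimitive_neg (s : ℝ) : gaussPrimitive (-s) = -gaussPrimitive s := by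
  simp only [gaussPrimitive]
  rw [integral_symm, ← neg_zero, ← integral_comp_neg, neg_zero]
  simp

theorem tendsto_gaussPrimitive_atTop : Tendsto gaussPrimitive atTop (𝓝 (√(2 * π) / 2)) := by
  have h := intervalIntegral_tendsto_integral_Ioi 0
    integrable_exp_neg_sq_div_two.integrableOn tendsto_id
  have hval : ∫ t in Ioi (0 : ℝ), exp (-t ^ 2 / 2) = √(2 * π) / 2 := by
    rw [show 2 * π = π / (1 / 2) by ring, ← integral_gaussian_Ioi]
    congr with t
    ring_nf
  rwa [hval] at h

theorem tendsto_gaussPrimitive_atBot : Tendsto gaussPrimitive atBot (𝓝 (-(√(2 * π) / 2))) := by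
  have h := (tendsto_gaussPrimitive_atTop.comp tendsto_neg_atBot_atTop).neg
  simpa [Function.comp_def, gaussPrimitive_neg] using h

noncomputable def gaussArg (x y σ τ : ℝ) : ℝ :=
  (x * (σ - τ) - y * τ) / (√σ * (√τ * √(σ - τ)))

section gaussArg

variable {x y σ τ : ℝ}

theorem gaussArg_denom_pos (hτ : τ ∈ Ioo 0 σ) : 0 < √σ * (√τ * √(σ - τ)) := by
  have : 0 < √τ := sqrt_pos.2 hτ.1
  have : 0 < √(σ - τ) := sqrt_pos.2 (sub_pos.2 hτ.2)
  have : 0 < √σ := sqrt_pos.2 (hτ.1.trans hτ.2)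
  positivity

theorem gaussArg_sq (hτ : τ ∈ Ioo 0 σ) :
    gaussArg x y σ τ ^ 2 = (x * (σ - τ) - y * τ) ^ 2 / (σ * (τ * (σ - τ))) := by
  rw [gaussArg, div_pow, mul_pow, mul_pow, sq_sqrt (hτ.1.trans hτ.2).le, sq_sqrt hτ.1.le,
    sq_sqrt (sub_pos.2 hτ.2).le]

theorem gaussArg_neg_sq (hτ : τ ∈ Ioo 0 σ) :
    gaussArg x (-y) σ τ ^ 2 = gaussArg x y σ τ ^ 2 + 4 * x * y / σ := by
  have := hτ.1
  have : 0 < σ - τ := sub_pos.2 hτ.2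
  have : 0 < σ := hτ.1.trans hτ.2
  rw [gaussArg_sq hτ, gaussArg_sq hτ]
  field_simp
  ring

theorem exponent_sum_eq_gaussArg_sq (hτ : τ ∈ Ioo 0 σ) :
    -y ^ 2 / (2 * (σ - τ)) + -x ^ 2 / (2 * τ) =
      -(x + y) ^ 2 / (2 * σ) + -gaussArg x y σ τ ^ 2 / 2 := by
  have := hτ.1
  have : 0 < σ - τ := sub_pos.2 hτ.2
  have : 0 < σ := hτ.1.trans hτ.2
  rw [gaussArg_sq hτ]
  field_simp
  ring

theorem hasDerivAt_gaussArg (hτ : τ ∈ Ioo 0 σ) :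
    HasDerivAt (gaussArg x y σ)
      (-(√σ / 2) * ((x * (σ - τ) + y * τ) / (√τ * √(σ - τ)) ^ 3)) τ := by
  obtain ⟨hτ0, hτσ⟩ := hτ
  have hστ : 0 < σ - τ := sub_pos.2 hτσ
  have hnum : HasDerivAt (fun t => x * (σ - t) - y * t) (-(x + y)) τ :=
    ((((hasDerivAt_id' τ).const_sub σ).const_mul x).sub
      ((hasDerivAt_id' τ).const_mul y)).congr_deriv (by ring)
  have hden : HasDerivAt (fun t => √σ * (√t * √(σ - t)))
      (√σ * (1 / (2 * √τ) * √(σ - τ) + √τ * (-1 / (2 * √(σ - τ))))) τ :=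
    ((hasDerivAt_sqrt hτ0.ne').mul (((hasDerivAt_id τ).const_sub σ).sqrt hστ.ne')).const_mul _
  have : 0 < √τ := sqrt_pos.2 hτ0
  have : 0 < √(σ - τ) := sqrt_pos.2 hστ
  have : 0 < √σ := sqrt_pos.2 (hτ0.trans hτσ)
  refine (hnum.div hden (gaussArg_denom_pos ⟨hτ0, hτσ⟩).ne').congr_deriv ?_
  have hp : √τ ^ 2 = τ := sq_sqrt hτ0.le
  have hq : √(σ - τ) ^ 2 = σ - τ := sq_sqrt hστ.le
  have hs : √σ ^ 2 = √τ ^ 2 + √(σ - τ) ^ 2 := by rw [sq_sqrt (by linarith), hp, hq]; ring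
  set p := √τ
  set q := √(σ - τ)
  set s := √σ
  rw [show σ = p ^ 2 + q ^ 2 by rw [hp, hq]; ring, ← hp]
  field_simp
  linear_combination (x * q ^ 2 + y * p ^ 2) * hs

theorem tendsto_gaussArg_denom_nhdsGT (hσ : 0 < σ) :
    Tendsto (fun τ => √σ * (√τ * √(σ - τ))) (𝓝[>] 0) (𝓝[>] 0) := by
  refine tendsto_nhdsWithin_of_tendsto_nhds_of_eventually_within _ ?_ ?_
  · simpa using ((by fun_prop : Continuous fun τ => √σ * (√τ * √(σ - τ))).tendsto 0).mono_left
      nhdsWithin_le_nhds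
  · filter_upwards [Ioo_mem_nhdsGT hσ] with τ hτ using gaussArg_denom_pos hτ

theorem tendsto_gaussArg_denom_nhdsLT (hσ : 0 < σ) :
    Tendsto (fun τ => √σ * (√τ * √(σ - τ))) (𝓝[<] σ) (𝓝[>] 0) := by
  refine tendsto_nhdsWithin_of_tendsto_nhds_of_eventually_within _ ?_ ?_
  · simpa using ((by fun_prop : Continuous fun τ => √σ * (√τ * √(σ - τ))).tendsto σ).mono_left
      nhdsWithin_le_nhds
  · filter_upwards [Ioo_mem_nhdsLT hσ] with τ hτ using gaussArg_denom_pos hτ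

theorem gaussArg_eq_mul_inv :
    gaussArg x y σ = fun τ => (x * (σ - τ) - y * τ) * (√σ * (√τ * √(σ - τ)))⁻¹ := by
  ext τ
  exact div_eq_mul_inv _ _

theorem tendsto_gaussArg_nhdsGT_zero (hx : 0 < x) (hσ : 0 < σ) :
    Tendsto (gaussArg x y σ) (𝓝[>] 0) atTop := by
  rw [gaussArg_eq_mul_inv]
  refine Tendsto.pos_mul_atTop (C := x * σ) (by positivity) ?_
    (tendsto_gaussArg_denom_nhdsGT hσ).inv_tendsto_nhdsGT_zero
  exact tendsto_nhdsWithin_of_tendsto_nhds (by simpa using (by fun_prop :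
    Continuous fun τ : ℝ => x * (σ - τ) - y * τ).tendsto 0)

theorem tendsto_gaussArg_nhdsLT_of_pos (hy : 0 < y) (hσ : 0 < σ) :
    Tendsto (gaussArg x y σ) (𝓝[<] σ) atBot := by
  rw [gaussArg_eq_mul_inv]
  refine Tendsto.neg_mul_atTop (C := -(y * σ)) (by simp; positivity) ?_
    (tendsto_gaussArg_denom_nhdsLT hσ).inv_tendsto_nhdsGT_zero
  exact tendsto_nhdsWithin_of_tendsto_nhds (by simpa using (by fun_prop :
    Continuous fun τ : ℝ => x * (σ - τ) - y * τ).tendsto σ)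

theorem tendsto_gaussArg_nhdsLT_of_neg (hy : y < 0) (hσ : 0 < σ) :
    Tendsto (gaussArg x y σ) (𝓝[<] σ) atTop := by
  rw [gaussArg_eq_mul_inv]
  refine Tendsto.pos_mul_atTop (C := -(y * σ)) (by nlinarith) ?_
    (tendsto_gaussArg_denom_nhdsLT hσ).inv_tendsto_nhdsGT_zero
  exact tendsto_nhdsWithin_of_tendsto_nhds (by simpa using (by fun_prop :
    Continuous fun τ : ℝ => x * (σ - τ) - y * τ).tendsto σ)

end gaussArg

noncomputable def convPrimitive (x y σ τ : ℝ) : ℝ :=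
  (x + y) * gaussPrimitive (gaussArg x y σ τ) +
    (y - x) * exp (2 * x * y / σ) * gaussPrimitive (gaussArg x (-y) σ τ)

section convPrimitive

variable {x y σ τ : ℝ}

theorem hasDerivAt_convPrimitive (hτ : τ ∈ Ioo 0 σ) :
    HasDerivAt (convPrimitive x y σ)
      (-(√σ ^ 3 * x * y * exp (-gaussArg x y σ τ ^ 2 / 2) / (√τ * √(σ - τ)) ^ 3)) τ := by
  have hσ : 0 < σ := hτ.1.trans hτ.2
  have hu := (hasDerivAt_gaussPrimitive _).comp τ (hasDerivAt_gaussArg (x := x) (y := y) hτ)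
  have hv := (hasDerivAt_gaussPrimitive _).comp τ (hasDerivAt_gaussArg (x := x) (y := -y) hτ)
  have hexp : exp (2 * x * y / σ) * exp (-gaussArg x (-y) σ τ ^ 2 / 2) =
      exp (-gaussArg x y σ τ ^ 2 / 2) := by
    rw [← exp_add, gaussArg_neg_sq hτ]
    congr 1
    field_simp
    ring
  refine ((hu.const_mul (x + y)).add
    (hv.const_mul ((y - x) * exp (2 * x * y / σ)))).congr_deriv ?_
  have : 0 < √τ := sqrt_pos.2 hτ.1
  have : 0 < √(σ - τ) := sqrt_pos.2 (sub_pos.2 hτ.2)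
  rw [← hexp, show √σ ^ 3 = σ * √σ by rw [pow_succ, sq_sqrt hσ.le]]
  field_simp
  ring

theorem tendsto_convPrimitive_nhdsGT_zero (hx : 0 < x) (hσ : 0 < σ) :
    Tendsto (convPrimitive x y σ) (𝓝[>] 0)
      (𝓝 ((x + y) * (√(2 * π) / 2) + (y - x) * exp (2 * x * y / σ) * (√(2 * π) / 2))) :=
  ((tendsto_gaussPrimitive_atTop.comp (tendsto_gaussArg_nhdsGT_zero hx hσ)).const_mul _).add
    ((tendsto_gaussPrimitive_atTop.comp (tendsto_gaussArg_nhdsGT_zero hx hσ)).const_mul _)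

theorem tendsto_convPrimitive_nhdsLT (hy : 0 < y) (hσ : 0 < σ) :
    Tendsto (convPrimitive x y σ) (𝓝[<] σ)
      (𝓝 ((x + y) * -(√(2 * π) / 2) + (y - x) * exp (2 * x * y / σ) * (√(2 * π) / 2))) :=
  ((tendsto_gaussPrimitive_atBot.comp (tendsto_gaussArg_nhdsLT_of_pos hy hσ)).const_mul _).add
    ((tendsto_gaussPrimitive_atTop.comp
      (tendsto_gaussArg_nhdsLT_of_neg (neg_neg_of_pos hy) hσ)).const_mul _)

end convPrimitive

noncomputable def levyDensity (t z : ℝ) : ℝ := z * exp (-z ^ 2 / (2 * t)) / √(2 * π * t ^ 3)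

section levyDensity

variable {x y σ τ t z : ℝ}

theorem sqrt_two_pi_mul_pow_three (ht : 0 ≤ t) : √(2 * π * t ^ 3) = √(2 * π) * √t ^ 3 := by
  rw [sqrt_mul (by positivity), show t ^ 3 = t ^ 2 * t by ring, sqrt_mul (sq_nonneg t),
    sqrt_sq ht, pow_succ, sq_sqrt ht]

theorem hker_eq_exp_mul_levyDensity (ht : 0 < t) :
    hker t z = exp (z - t / 2) * levyDensity t z := by
  rw [hker, if_pos ht, levyDensity, mul_div_assoc', mul_left_comm, ← exp_add]
  congr 3
  field_simp
  ring

theorem levyDensity_nonneg (hz : 0 ≤ z) : 0 ≤ levyDensity t z := by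
  unfold levyDensity
  positivity

theorem levyDensity_mul_levyDensity (hτ : τ ∈ Ioo 0 σ) :
    levyDensity (σ - τ) y * levyDensity τ x =
      exp (-(x + y) ^ 2 / (2 * σ)) / (2 * π) *
        (x * y * exp (-gaussArg x y σ τ ^ 2 / 2) / (√τ * √(σ - τ)) ^ 3) := by
  have hστ : 0 < σ - τ := sub_pos.2 hτ.2
  have : 0 < √τ := sqrt_pos.2 hτ.1
  have : 0 < √(σ - τ) := sqrt_pos.2 hστ
  have h2π : √(2 * π) ^ 2 = 2 * π := sq_sqrt (by positivity)
  have hexp := congrArg exp (exponent_sum_eq_gaussArg_sq (x := x) (y := y) hτ)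
  rw [exp_add, exp_add] at hexp
  rw [levyDensity, levyDensity, sqrt_two_pi_mul_pow_three hστ.le,
    sqrt_two_pi_mul_pow_three hτ.1.le]
  field_simp
  simp only [neg_div] at hexp ⊢
  rw [h2π]
  linear_combination 2 * π * x * y * hexp

theorem integral_levyDensity_mul_levyDensity (hx : 0 < x) (hy : 0 < y) (hσ : 0 < σ) :
    ∫ τ in (0 : ℝ)..σ, levyDensity (σ - τ) y * levyDensity τ x = levyDensity σ (x + y) := by
  set c := exp (-(x + y) ^ 2 / (2 * σ)) / (2 * π * √σ ^ 3)
  have : 0 < √σ := sqrt_pos.2 hσ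
  have hderiv : ∀ τ ∈ Ioo 0 σ, HasDerivAt (fun τ => -c * convPrimitive x y σ τ)
      (levyDensity (σ - τ) y * levyDensity τ x) τ := by
    refine fun τ hτ => ((hasDerivAt_convPrimitive hτ).const_mul (-c)).congr_deriv ?_
    rw [levyDensity_mul_levyDensity hτ]
    simp only [c]
    field_simp
  have hpos : ∀ τ ∈ Ioo 0 σ, 0 ≤ levyDensity (σ - τ) y * levyDensity τ x := fun τ hτ =>
    mul_nonneg (levyDensity_nonneg hy.le) (levyDensity_nonneg hx.le)
  have h0 := (tendsto_convPrimitive_nhdsGT_zero (y := y) hx hσ).const_mul (-c)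
  have hσ' := (tendsto_convPrimitive_nhdsLT (x := x) hy hσ).const_mul (-c)
  rw [integral_eq_sub_of_hasDerivAt_of_tendsto hσ hderiv
    (intervalIntegrable_deriv_of_nonneg_of_tendsto hσ hderiv hpos h0 hσ') h0 hσ',
    levyDensity, sqrt_two_pi_mul_pow_three hσ.le]
  have h2π : √(2 * π) ^ 2 = 2 * π := sq_sqrt (by positivity)
  simp only [c]
  set r := √(2 * π)
  have : 0 < r := sqrt_pos.2 (by positivity)
  field_simp
  linear_combination 2 * (x + y) * h2π

end levyDensity

/-- Divisibility (convolution) property of first-passage densities of a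
Brownian motion with unit negative drift: for `x, y, σ > 0`,
`∫_0^σ h(σ-τ, y) h(τ, x) dτ = h(σ, x + y)`. -/
theorem first_passage_density_convolution (x y σ : ℝ) (hx : 0 < x) (hy : 0 < y)
    (hσ : 0 < σ) :
    ∫ τ in (0 : ℝ)..σ, hker (σ - τ) y * hker τ x = hker σ (x + y) := by
  have hdrift : EqOn (fun τ => hker (σ - τ) y * hker τ x)
      (fun τ => exp (x + y - σ / 2) * (levyDensity (σ - τ) y * levyDensity τ x)) (Ioo 0 σ) := by
    intro τ hτ
    dsimp only
    rw [hker_eq_exp_mul_levyDensity (sub_pos.2 hτ.2), hker_eq_exp_mul_levyDensity hτ.1,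
      mul_mul_mul_comm, ← exp_add]
    ring_nf
  rw [integral_congr_Ioo_of_le hσ.le hdrift, intervalIntegral.integral_const_mul,
    integral_levyDensity_mul_levyDensity hx hy hσ, hker_eq_exp_mul_levyDensity hσ]
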